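/- Let U ⊆ ℝ^(n+2) be open, (ξ, N) a null frame on U, and Z : U → ℝ^(n+2) differentiable and parallel (fderiv ℝ Z p = 0 for all p ∈ U). Assume that at every p ∈ U the operators A*_ξ(p) and A_N(p) are symmetric on screen vectors, and that for every p and every screen vector v at p the derivative of q ↦ η(Z q, ξ q) * η(Z q, N q) at p in the direction v vanishes (constant angle). Then A_{Z⊥}(p)(Z*(p)) = 0 for every p ∈ U. (Flat-Minkowski-ambient form of the paper's corollary that for a constant angle null hypersurface with respect to a parallel field the projected field is a principal direction with eigenvalue zero.) -/

import Mathlib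

/-!
For a parallel field `Z`, differentiating `η(Z, ξ)` and `η(Z, N)` only hits `ξ` and `N`. Together
with the flat Weingarten formulas `A*_ξ w = -(D_w ξ + τ(w) ξ)` and `A_N w = -(D_w N - τ(w) N)`,
in which the `τ`-terms cancel, this gives `η(Z, A_{Z⊥} w) = -D_w (η(Z, ξ) η(Z, N))`. For a screen
vector `w`, symmetry of the shape operators turns `η(A_{Z⊥} Z*, w)` into `η(Z*, A_{Z⊥} w) =
η(Z, A_{Z⊥} w)`, which vanishes by the constant angle condition. So `A_{Z⊥} Z*` is a screen vector
orthogonal to the whole screen; the screen is orthogonal to the timelike vector `ξ - N`, hence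
spacelike, and the vector vanishes.
-/

open scoped BigOperators

noncomputable section

/-- Euclidean space `ℝ^m`. -/
abbrev E (m : ℕ) : Type := EuclideanSpace ℝ (Fin m)

/-- The Minkowski bilinear form `η(x,y) = -(x 0)(y 0) + ∑_{i≥1} (x i)(y i)` on `ℝ^(n+2)`. -/
def eta {n : ℕ} (x y : E (n + 2)) : ℝ :=
  (∑ i, x i * y i) - 2 * (x 0 * y 0)

/-- Screen projection `P_p(w) = w - η(w,N)ξ - η(w,ξ)N` determined by the null frame at a point. -/
def sproj {n : ℕ} (xi N w : E (n + 2)) : E (n + 2) :=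
  w - eta w N • xi - eta w xi • N

/-- Screen shape operator `A*_ξ(p)(v) = -P_p(D_v ξ (p))`. -/
def Astar {n : ℕ} (xi N : E (n + 2) → E (n + 2)) (p v : E (n + 2)) : E (n + 2) :=
  -sproj (xi p) (N p) (fderiv ℝ xi p v)

/-- Shape operator `A_N(p)(v) = -P_p(D_v N (p))`. -/
def AN {n : ℕ} (xi N : E (n + 2) → E (n + 2)) (p v : E (n + 2)) : E (n + 2) :=
  -sproj (xi p) (N p) (fderiv ℝ N p v)

/-- Transversal one-form `τ_p(v) = η(D_v N(p), ξ p)`. -/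
def tau {n : ℕ} (xi N : E (n + 2) → E (n + 2)) (p v : E (n + 2)) : ℝ :=
  eta (fderiv ℝ N p v) (xi p)

/-- Screen part `Z*(p) = P_p(Z p)` of a vector field. -/
def Zstar {n : ℕ} (xi N Z : E (n + 2) → E (n + 2)) (p : E (n + 2)) : E (n + 2) :=
  sproj (xi p) (N p) (Z p)

/-- `A_{Z⊥}(p)(v) = η(Z p, N p) • A*_ξ(p)(v) + η(Z p, ξ p) • A_N(p)(v)`. -/
def AZperp {n : ℕ} (xi N Z : E (n + 2) → E (n + 2)) (p v : E (n + 2)) : E (n + 2) :=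
  eta (Z p) (N p) • Astar xi N p v + eta (Z p) (xi p) • AN xi N p v

open scoped RealInnerProductSpace Topology

section MinkowskiForm

variable {n : ℕ}

lemma eta_eq_inner (x y : E (n + 2)) : eta x y = ⟪x, y⟫ - 2 * (x 0 * y 0) := by
  simp [eta, PiLp.inner_apply, mul_comm]

def etaL : E (n + 2) →L[ℝ] E (n + 2) →L[ℝ] ℝ :=
  innerSL ℝ - (2 : ℝ) • (ContinuousLinearMap.mul ℝ ℝ).bilinearComp
    (EuclideanSpace.proj 0) (EuclideanSpace.proj 0)

@[simp] lemma etaL_apply (x y : E (n + 2)) : etaL x y = eta x y := by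
  simp only [etaL, sub_apply, smul_apply, ContinuousLinearMap.bilinearComp_apply,
    PiLp.proj_apply, ContinuousLinearMap.mul_apply', smul_eq_mul, eta_eq_inner, sub_left_inj]
  rfl

lemma eta_comm (x y : E (n + 2)) : eta x y = eta y x := by
  simp only [eta_eq_inner, real_inner_comm, mul_comm]

@[simp] lemma eta_zero_left (y : E (n + 2)) : eta 0 y = 0 := by
  simp only [← etaL_apply, map_zero, zero_apply]

@[simp] lemma eta_add_left (x x' y : E (n + 2)) : eta (x + x') y = eta x y + eta x' y := by
  simp only [← etaL_apply, map_add, add_apply]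

@[simp] lemma eta_sub_left (x x' y : E (n + 2)) : eta (x - x') y = eta x y - eta x' y := by
  simp only [← etaL_apply, map_sub, sub_apply]

@[simp] lemma eta_neg_left (x y : E (n + 2)) : eta (-x) y = -eta x y := by
  simp only [← etaL_apply, map_neg, neg_apply]

@[simp] lemma eta_smul_left (r : ℝ) (x y : E (n + 2)) : eta (r • x) y = r * eta x y := by
  simp only [← etaL_apply, map_smul, smul_apply, smul_eq_mul]

@[simp] lemma eta_zero_right (x : E (n + 2)) : eta x 0 = 0 := by
  simp only [← etaL_apply, map_zero]

@[simp] lemma eta_add_right (x y y' : E (n + 2)) : eta x (y + y') = eta x y + eta x y' := by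
  simp only [← etaL_apply, map_add]

@[simp] lemma eta_sub_right (x y y' : E (n + 2)) : eta x (y - y') = eta x y - eta x y' := by
  simp only [← etaL_apply, map_sub]

@[simp] lemma eta_neg_right (x y : E (n + 2)) : eta x (-y) = -eta x y := by
  simp only [← etaL_apply, map_neg]

@[simp] lemma eta_smul_right (r : ℝ) (x y : E (n + 2)) : eta x (r • y) = r * eta x y := by
  simp only [← etaL_apply, map_smul, smul_eq_mul]

lemma eq_zero_of_eta_self_nonpos_of_eta_timelike {x c : E (n + 2)} (hc : eta c c < 0)
    (hxc : eta x c = 0) (hxx : eta x x ≤ 0) : x = 0 := by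
  rw [eta_eq_inner] at hc hxc hxx
  have hcs := real_inner_mul_inner_self_le x c
  rw [show ⟪x, c⟫ = 2 * (x 0 * c 0) by linarith] at hcs
  -- otherwise `(2 x₀ c₀)² ≤ ⟪x, x⟫ ⟪c, c⟫ ≤ 2 x₀² ⟪c, c⟫ < (2 x₀ c₀)²`
  have hx0 : x 0 = 0 := by
    by_contra hx0
    have hx0_sq := mul_self_pos.2 hx0
    nlinarith [mul_le_mul_of_nonneg_right (by linarith : ⟪x, x⟫ ≤ 2 * (x 0 * x 0))
      (real_inner_self_nonneg (x := c)), mul_pos hx0_sq (by linarith : 0 < 2 * (c 0 * c 0) - ⟪c, c⟫)]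
  exact real_inner_self_nonpos.1 (by simpa [hx0] using hxx)

lemma fderiv_eta_apply {f g : E (n + 2) → E (n + 2)} {p : E (n + 2)}
    (hf : DifferentiableAt ℝ f p) (hg : DifferentiableAt ℝ g p) (v : E (n + 2)) :
    fderiv ℝ (fun q => eta (f q) (g q)) p v =
      eta (fderiv ℝ f p v) (g p) + eta (f p) (fderiv ℝ g p v) := by
  simp only [← etaL_apply, etaL.fderiv_of_bilinear hf hg]
  simp [add_comm]

lemma DifferentiableAt.eta {f g : E (n + 2) → E (n + 2)} {p : E (n + 2)}
    (hf : DifferentiableAt ℝ f p) (hg : DifferentiableAt ℝ g p) :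
    DifferentiableAt ℝ (fun q => eta (f q) (g q)) p := by
  simpa only [etaL_apply] using
    (etaL.hasFDerivAt_of_bilinear hf.hasFDerivAt hg.hasFDerivAt).differentiableAt

lemma eta_fderiv_add_eta_fderiv_eq_zero {f g : E (n + 2) → E (n + 2)} {p : E (n + 2)} {c : ℝ}
    (hf : DifferentiableAt ℝ f p) (hg : DifferentiableAt ℝ g p)
    (hc : ∀ᶠ q in 𝓝 p, eta (f q) (g q) = c) (v : E (n + 2)) :
    eta (fderiv ℝ f p v) (g p) + eta (f p) (fderiv ℝ g p v) = 0 := by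
  rw [← fderiv_eta_apply hf hg, Filter.EventuallyEq.fderiv_eq (f := fun _ => c) hc]
  simp

def screen (ξ N : E (n + 2)) : Submodule ℝ (E (n + 2)) where
  carrier := {v | eta v ξ = 0 ∧ eta v N = 0}
  add_mem' := by
    rintro v w ⟨hvξ, hvN⟩ ⟨hwξ, hwN⟩
    simp [hvξ, hvN, hwξ, hwN]
  zero_mem' := by simp
  smul_mem' := by
    rintro r v ⟨hvξ, hvN⟩
    simp [hvξ, hvN]

end MinkowskiForm

section ScreenProjection

variable {n : ℕ} {ξ N : E (n + 2)}

lemma sproj_mem_screen (hξξ : eta ξ ξ = 0) (hNN : eta N N = 0) (hξN : eta ξ N = 1)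
    (w : E (n + 2)) : sproj ξ N w ∈ screen ξ N := by
  constructor <;> simp [sproj, hξξ, hNN, hξN, eta_comm N ξ]

lemma eta_sproj_of_mem_screen {X : E (n + 2)} (hX : X ∈ screen ξ N) (z : E (n + 2)) :
    eta (sproj ξ N z) X = eta z X := by
  simp [sproj, eta_comm ξ X, eta_comm N X, hX.1, hX.2]

/-- Since `ξ - N` is timelike, the screen is spacelike. -/
lemma eq_zero_of_mem_screen_of_forall_eta_eq_zero (hξξ : eta ξ ξ = 0) (hNN : eta N N = 0)
    (hξN : eta ξ N = 1) {u : E (n + 2)} (hu : u ∈ screen ξ N)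
    (h : ∀ w ∈ screen ξ N, eta u w = 0) : u = 0 := by
  refine eq_zero_of_eta_self_nonpos_of_eta_timelike (c := ξ - N) ?_ ?_ (h u hu).le
  · simp [hξξ, hNN, hξN, eta_comm N ξ]
  · simp [hu.1, hu.2]

end ScreenProjection

structure IsNullFrameOn {n : ℕ} (U : Set (E (n + 2))) (ξ N : E (n + 2) → E (n + 2)) : Prop where
  differentiableAt_xi : ∀ p ∈ U, DifferentiableAt ℝ ξ p
  differentiableAt_N : ∀ p ∈ U, DifferentiableAt ℝ N p
  eta_xi_xi : ∀ p ∈ U, eta (ξ p) (ξ p) = 0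
  eta_N_N : ∀ p ∈ U, eta (N p) (N p) = 0
  eta_xi_N : ∀ p ∈ U, eta (ξ p) (N p) = 1

namespace IsNullFrameOn

variable {n : ℕ} {U : Set (E (n + 2))} {ξ N : E (n + 2) → E (n + 2)} {p : E (n + 2)}

lemma sproj_mem_screen (hF : IsNullFrameOn U ξ N) (hp : p ∈ U) (w : E (n + 2)) :
    sproj (ξ p) (N p) w ∈ screen (ξ p) (N p) :=
  _root_.sproj_mem_screen (hF.eta_xi_xi p hp) (hF.eta_N_N p hp) (hF.eta_xi_N p hp) w

lemma eta_fderiv_xi_xi (hF : IsNullFrameOn U ξ N) (hU : IsOpen U) (hp : p ∈ U)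
    (v : E (n + 2)) : eta (fderiv ℝ ξ p v) (ξ p) = 0 := by
  have h := eta_fderiv_add_eta_fderiv_eq_zero (hF.differentiableAt_xi p hp)
    (hF.differentiableAt_xi p hp) (Filter.eventually_of_mem (hU.mem_nhds hp) hF.eta_xi_xi) v
  rw [eta_comm (ξ p)] at h
  linarith

lemma eta_fderiv_N_N (hF : IsNullFrameOn U ξ N) (hU : IsOpen U) (hp : p ∈ U)
    (v : E (n + 2)) : eta (fderiv ℝ N p v) (N p) = 0 := by
  have h := eta_fderiv_add_eta_fderiv_eq_zero (hF.differentiableAt_N p hp)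
    (hF.differentiableAt_N p hp) (Filter.eventually_of_mem (hU.mem_nhds hp) hF.eta_N_N) v
  rw [eta_comm (N p)] at h
  linarith

lemma eta_fderiv_xi_N (hF : IsNullFrameOn U ξ N) (hU : IsOpen U) (hp : p ∈ U)
    (v : E (n + 2)) : eta (fderiv ℝ ξ p v) (N p) = -tau ξ N p v := by
  have h := eta_fderiv_add_eta_fderiv_eq_zero (hF.differentiableAt_xi p hp)
    (hF.differentiableAt_N p hp) (Filter.eventually_of_mem (hU.mem_nhds hp) hF.eta_xi_N) v
  rw [eta_comm (ξ p)] at h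
  rw [tau]
  linarith

lemma Astar_eq (hF : IsNullFrameOn U ξ N) (hU : IsOpen U) (hp : p ∈ U) (v : E (n + 2)) :
    Astar ξ N p v = -(fderiv ℝ ξ p v + tau ξ N p v • ξ p) := by
  rw [Astar, sproj, hF.eta_fderiv_xi_N hU hp, hF.eta_fderiv_xi_xi hU hp, neg_smul, zero_smul,
    sub_neg_eq_add, sub_zero]

lemma AN_eq (hF : IsNullFrameOn U ξ N) (hU : IsOpen U) (hp : p ∈ U) (v : E (n + 2)) :
    AN ξ N p v = -(fderiv ℝ N p v - tau ξ N p v • N p) := by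
  rw [AN, sproj, hF.eta_fderiv_N_N hU hp, zero_smul, sub_zero, tau]

lemma AZperp_mem_screen (hF : IsNullFrameOn U ξ N) (hp : p ∈ U) (Z : E (n + 2) → E (n + 2))
    (v : E (n + 2)) : AZperp ξ N Z p v ∈ screen (ξ p) (N p) :=
  add_mem (Submodule.smul_mem _ _ (neg_mem (hF.sproj_mem_screen hp _)))
    (Submodule.smul_mem _ _ (neg_mem (hF.sproj_mem_screen hp _)))

lemma eta_AZperp_eq_neg_fderiv_of_fderiv_eq_zero (hF : IsNullFrameOn U ξ N) (hU : IsOpen U)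
    (hp : p ∈ U) {Z : E (n + 2) → E (n + 2)} (hZ : DifferentiableAt ℝ Z p)
    (hZpar : fderiv ℝ Z p = 0) (w : E (n + 2)) :
    eta (Z p) (AZperp ξ N Z p w) =
      -fderiv ℝ (fun q => eta (Z q) (ξ q) * eta (Z q) (N q)) p w := by
  have hξ := hF.differentiableAt_xi p hp
  have hN := hF.differentiableAt_N p hp
  rw [fderiv_fun_mul (hZ.eta hξ) (hZ.eta hN), add_apply, smul_apply, smul_apply,
    fderiv_eta_apply hZ hξ, fderiv_eta_apply hZ hN, hZpar, AZperp, hF.Astar_eq hU hp,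
    hF.AN_eq hU hp]
  simp only [zero_apply, eta_zero_left, zero_add, eta_add_right, eta_sub_right, eta_neg_right,
    eta_smul_right, smul_eq_mul]
  ring

end IsNullFrameOn

lemma eta_AZperp_comm {n : ℕ} {ξ N Z : E (n + 2) → E (n + 2)} {p : E (n + 2)}
    (hA : ∀ v ∈ screen (ξ p) (N p), ∀ w ∈ screen (ξ p) (N p),
      eta (Astar ξ N p v) w = eta v (Astar ξ N p w))
    (hAN : ∀ v ∈ screen (ξ p) (N p), ∀ w ∈ screen (ξ p) (N p),
      eta (AN ξ N p v) w = eta v (AN ξ N p w))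
    {v w : E (n + 2)} (hv : v ∈ screen (ξ p) (N p)) (hw : w ∈ screen (ξ p) (N p)) :
    eta (AZperp ξ N Z p v) w = eta v (AZperp ξ N Z p w) := by
  simp only [AZperp, eta_add_left, eta_add_right, eta_smul_left, eta_smul_right,
    hA v hv w hw, hAN v hv w hw]

/-- For a screen integrable constant angle null hypersurface with respect to
a parallel field, the projected field is a principal direction of `A_{Z⊥}` with eigenvalue
zero (flat Minkowski ambient form). -/
theorem constant_angle_parallel_eigenvalue_zero {n : ℕ}
    (U : Set (E (n + 2))) (hU : IsOpen U)
    (ξ N Z : E (n + 2) → E (n + 2))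
    (hξd : ∀ p ∈ U, DifferentiableAt ℝ ξ p)
    (hNd : ∀ p ∈ U, DifferentiableAt ℝ N p)
    (hZd : ∀ p ∈ U, DifferentiableAt ℝ Z p)
    (hξξ : ∀ p ∈ U, eta (ξ p) (ξ p) = 0)
    (hNN : ∀ p ∈ U, eta (N p) (N p) = 0)
    (hξN : ∀ p ∈ U, eta (ξ p) (N p) = 1)
    (hpar : ∀ p ∈ U, fderiv ℝ Z p = 0)
    (hAsym : ∀ p ∈ U, ∀ v w : E (n + 2),
      eta v (ξ p) = 0 → eta v (N p) = 0 → eta w (ξ p) = 0 → eta w (N p) = 0 →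
      eta (Astar ξ N p v) w = eta v (Astar ξ N p w))
    (hANsym : ∀ p ∈ U, ∀ v w : E (n + 2),
      eta v (ξ p) = 0 → eta v (N p) = 0 → eta w (ξ p) = 0 → eta w (N p) = 0 →
      eta (AN ξ N p v) w = eta v (AN ξ N p w))
    (hang : ∀ p ∈ U, ∀ v : E (n + 2), eta v (ξ p) = 0 → eta v (N p) = 0 →
      fderiv ℝ (fun q => eta (Z q) (ξ q) * eta (Z q) (N q)) p v = 0) :
    ∀ p ∈ U, AZperp ξ N Z p (Zstar ξ N Z p) = 0 := by
  intro p hp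
  have hF : IsNullFrameOn U ξ N := ⟨hξd, hNd, hξξ, hNN, hξN⟩
  have hZs : Zstar ξ N Z p ∈ screen (ξ p) (N p) := hF.sproj_mem_screen hp (Z p)
  refine eq_zero_of_mem_screen_of_forall_eta_eq_zero (hξξ p hp) (hNN p hp) (hξN p hp)
    (hF.AZperp_mem_screen hp Z _) fun w hw => ?_
  calc eta (AZperp ξ N Z p (Zstar ξ N Z p)) w
      = eta (Zstar ξ N Z p) (AZperp ξ N Z p w) :=
        eta_AZperp_comm (fun v hv w hw => hAsym p hp v w hv.1 hv.2 hw.1 hw.2)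
          (fun v hv w hw => hANsym p hp v w hv.1 hv.2 hw.1 hw.2) hZs hw
    _ = eta (Z p) (AZperp ξ N Z p w) :=
        eta_sproj_of_mem_screen (hF.AZperp_mem_screen hp Z w) (Z p)
    _ = -fderiv ℝ (fun q => eta (Z q) (ξ q) * eta (Z q) (N q)) p w :=
        hF.eta_AZperp_eq_neg_fderiv_of_fderiv_eq_zero hU hp (hZd p hp) (hpar p hp) w
    _ = 0 := by rw [hang p hp w hw.1 hw.2, neg_zero]

end
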